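/- arXiv:0911.4582 — 2 statements merged into one kernel-verified Lean document; each statement's English description precedes it below -/
import Mathlib

section
/- If h : ℝ → ℝ is a smooth even function, then the function t ↦ h'(t)/(2t), extended by its limit h''(0)/2 at t = 0, is again a smooth even function on ℝ. -/
theorem stmt_1_param_aux : ∀ n : ℕ, ∀ F : ℝ × ℝ → ℝ, ContDiff ℝ (⊤ : ℕ∞) F →
    ContDiff ℝ n (fun t => ∫ s in (0:ℝ)..1, F (t, s)) := by
  intro n
  induction n with
  | zero =>
    intro F hF
    rw [show ((0:ℕ) : WithTop ℕ∞) = 0 from rfl, contDiff_zero]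
    have hc : Continuous (fun p : ℝ × ℝ => F p) := hF.continuous
    exact intervalIntegral.continuous_parametric_intervalIntegral_of_continuous'
      (f := fun t s => F (t, s)) (by simpa [Function.uncurry_def] using hc) 0 1
  | succ n ih =>
    intro F hF
    set F' : ℝ × ℝ → ℝ := fun p => fderiv ℝ F p (1, 0) with hF'
    have hF'c : ContDiff ℝ (⊤ : ℕ∞) F' :=
      (hF.fderiv_right (m := (⊤ : ℕ∞)) le_rfl).clm_apply contDiff_const
    have hdiff : ∀ x s : ℝ, HasDerivAt (fun x => F (x, s)) (F' (x, s)) x := by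
      intro x s
      have h1 : HasDerivAt (fun x : ℝ => (x, s)) ((1 : ℝ), (0 : ℝ)) x :=
        (hasDerivAt_id x).prodMk (hasDerivAt_const x s)
      exact ((hF.differentiable (by simp)) (x, s)).hasFDerivAt.comp_hasDerivAt x h1
    have hder : ∀ x₀ : ℝ, HasDerivAt (fun t => ∫ s in (0:ℝ)..1, F (t, s))
        (∫ s in (0:ℝ)..1, F' (x₀, s)) x₀ := by
      intro x₀
      obtain ⟨C, hC⟩ := ((isCompact_closedBall x₀ 1).prod isCompact_Icc).exists_bound_of_continuousOn
        (hF'c.continuous.continuousOn (s := Metric.closedBall x₀ 1 ×ˢ Set.Icc (0:ℝ) 1))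
      refine (intervalIntegral.hasDerivAt_integral_of_dominated_loc_of_deriv_le
        (F := fun t s => F (t, s)) (F' := fun t s => F' (t, s)) (bound := fun _ => C)
        (Metric.closedBall_mem_nhds x₀ one_pos) ?_ ?_ ?_ ?_ intervalIntegrable_const ?_).2
      · exact Filter.Eventually.of_forall (fun x =>
          (hF.continuous.comp (Continuous.prodMk continuous_const continuous_id)).aestronglyMeasurable)
      · exact (hF.continuous.comp (Continuous.prodMk continuous_const continuous_id)).intervalIntegrable _ _
      · exact (hF'c.continuous.comp (Continuous.prodMk continuous_const continuous_id)).aestronglyMeasurable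
      · refine Filter.Eventually.of_forall (fun s hs x hx => hC (x, s) ⟨hx, ?_⟩)
        rw [Set.uIoc_of_le zero_le_one] at hs
        exact ⟨hs.1.le, hs.2⟩
      · exact Filter.Eventually.of_forall (fun s _ x _ => hdiff x s)
    have hd : deriv (fun t => ∫ s in (0:ℝ)..1, F (t, s)) = fun t => ∫ s in (0:ℝ)..1, F' (t, s) := by
      funext t; exact (hder t).deriv
    have : ((n + 1 : ℕ) : WithTop ℕ∞) = (n : WithTop ℕ∞) + 1 := by push_cast; rfl
    rw [this, contDiff_succ_iff_deriv]
    refine ⟨fun x => (hder x).differentiableAt, by simp, ?_⟩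
    rw [hd]
    exact ih F' hF'c

/-- If `h : ℝ → ℝ` is a smooth even function, then `t ↦ h'(t)/(2t)`, extended by its
limit `h''(0)/2` at `t = 0`, is again a smooth even function on `ℝ`. -/
theorem stmt_1 (h : ℝ → ℝ) (hh : ContDiff ℝ (⊤ : ℕ∞) h) (heven : ∀ t : ℝ, h (-t) = h t)
    (g : ℝ → ℝ)
    (hg : ∀ t : ℝ, t ≠ 0 → g t = deriv h t / (2 * t))
    (hg0 : g 0 = deriv (deriv h) 0 / 2) :
    ContDiff ℝ (⊤ : ℕ∞) g ∧ ∀ t : ℝ, g (-t) = g t := by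
  -- `deriv h` is odd
  have hodd : ∀ t : ℝ, deriv h (-t) = -deriv h t := by
    intro t
    have : deriv (fun x : ℝ => h (-x)) t = deriv h t := by
      congr 1; funext x; exact heven x
    rw [deriv_comp_neg] at this
    linarith
  have hd0 : deriv h 0 = 0 := by
    have := hodd 0
    simp at this
    linarith
  -- `h` and `deriv h` are analytic
  have h1 := (contDiff_infty_iff_deriv.mp hh).2
  have h2 := (contDiff_infty_iff_deriv.mp h1).2
  have hd1 := (contDiff_infty_iff_deriv.mp hh).1
  have hd2 := (contDiff_infty_iff_deriv.mp h1).1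
  have hgeq : g = fun t => (∫ s in (0:ℝ)..1, deriv (deriv h) (t * s)) / 2 := by
    funext t
    rcases eq_or_ne t 0 with rfl | ht
    · simp [hg0]
    · rw [hg t ht]
      have hftc : ∫ s in (0:ℝ)..1, t * deriv (deriv h) (t * s) = deriv h (t * 1) - deriv h (t * 0) := by
        apply intervalIntegral.integral_eq_sub_of_hasDerivAt (f := fun s => deriv h (t * s))
        · intro x _
          have := (hd2 (t * x)).hasDerivAt.comp x ((hasDerivAt_id x).const_mul t)
          rw [mul_one, mul_comm] at this
          exact this
        · exact (continuous_const.mul (h2.continuous.comp (continuous_const.mul continuous_id))).intervalIntegrable _ _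
      rw [intervalIntegral.integral_const_mul] at hftc
      simp only [mul_one, mul_zero, hd0, sub_zero] at hftc
      rw [← hftc]
      field_simp
  constructor
  · rw [hgeq]
    exact (contDiff_infty.mpr (fun n => stmt_1_param_aux n (fun p => deriv (deriv h) (p.1 * p.2))
      (h2.comp (contDiff_fst.mul contDiff_snd)))).div_const 2
  · intro t
    rcases eq_or_ne t 0 with rfl | ht
    · norm_num
    · rw [hg t ht, hg (-t) (neg_ne_zero.mpr ht), hodd t]
      field_simp
end

section
/- Let h : ℝⁿ → ℝ be continuous with support contained in the ball |x| ≤ R, and let (Mh)(x,t) = (1/|S^{n-1}|) ∫_{|θ|=1} h(x + tθ) dθ be the spherical mean. Then there is a constant C (depending on h, R, n) such that |(Mh)(x,t)| ≤ C (1+t)^{-(n-1)} for all x ∈ ℝⁿ and all t ≥ 1. -/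
/-! The integrand `h (x + tθ)` vanishes unless `x + tθ` lies in the ball of radius `R`, and
those `θ` form a cap of radius `r = 2R/t` on the unit sphere. The surface measure of a cap is `n`
times the volume of the cone `(0,1) • cap`, and this cone is covered by `⌊1/r⌋ + 1` balls of
radius `2r` centred along a radius of the sphere; so the cap has measure `O(r^(n-1))`, and
`|Mh(x,t)| ≤ sup |h| · O(t^(1-n))`. -/

open MeasureTheory Metric

/-- The spherical mean `(Mh)(x,t) = (1/|S^{n-1}|) ∫_{|θ|=1} h(x+tθ) dθ`, where the
integral is with respect to the surface measure on the unit sphere of `ℝⁿ` and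
`|S^{n-1}| = 2π^{n/2}/Γ(n/2)`. -/
noncomputable def sphericalMean (n : ℕ) (h : EuclideanSpace ℝ (Fin n) → ℝ)
    (x : EuclideanSpace ℝ (Fin n)) (t : ℝ) : ℝ :=
  (2 * Real.pi ^ ((n : ℝ) / 2) / Real.Gamma ((n : ℝ) / 2))⁻¹ *
    ∫ θ : sphere (0 : EuclideanSpace ℝ (Fin n)) 1,
      h (x + t • (θ : EuclideanSpace ℝ (Fin n)))
      ∂((volume : Measure (EuclideanSpace ℝ (Fin n))).toSphere)

open Module
open scoped Pointwise

/-- A point `c • θ` of the cone lies within `2r` of `(⌊c/r⌋ r) • p`. -/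
lemma Ioo_smul_subset_biUnion_closedBall {E : Type*} [NormedAddCommGroup E] [NormedSpace ℝ E]
    {p : E} (hp : ‖p‖ ≤ 1) {r : ℝ} (hr : 0 < r) {s : Set E} (hs : s ⊆ closedBall p r) :
    Set.Ioo (0 : ℝ) 1 • s ⊆
      ⋃ i ∈ Finset.range (⌊1 / r⌋₊ + 1), closedBall (((i : ℝ) * r) • p) (2 * r) := by
  rintro _ ⟨c, ⟨hc0, hc1⟩, θ, hθ, rfl⟩
  set i := ⌊c / r⌋₊
  have hi_le : (i : ℝ) * r ≤ c := (le_div_iff₀ hr).1 (Nat.floor_le (by positivity))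
  have hi_gt : c - (i : ℝ) * r < r := by
    have := (div_lt_iff₀ hr).1 (Nat.lt_floor_add_one (c / r))
    linarith
  have hi_range : i < ⌊1 / r⌋₊ + 1 := Nat.lt_succ_of_le (Nat.floor_mono (by gcongr))
  refine Set.mem_biUnion (Finset.mem_range.2 hi_range) (mem_closedBall.2 ?_)
  have hθp : dist θ p ≤ r := hs hθ
  calc dist (c • θ) (((i : ℝ) * r) • p)
      ≤ dist (c • θ) (c • p) + dist (c • p) (((i : ℝ) * r) • p) := dist_triangle _ _ _
    _ = c * dist θ p + (c - i * r) * ‖p‖ := by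
        rw [dist_smul₀, Real.norm_of_nonneg hc0.le, dist_eq_norm (c • p), ← sub_smul, norm_smul,
          Real.norm_of_nonneg (by linarith)]
    _ ≤ 1 * r + r * 1 := by gcongr
    _ = 2 * r := by ring

lemma natFloor_one_div_add_one_mul_pow_le {r : ℝ} (hr0 : 0 < r) (hr1 : r ≤ 1) {d : ℕ}
    (hd : 0 < d) : ((⌊1 / r⌋₊ : ℝ) + 1) * (2 * r) ^ d ≤ 2 ^ (d + 1) * r ^ (d - 1) := by
  have hN : (⌊1 / r⌋₊ : ℝ) + 1 ≤ 2 / r := by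
    have h1 : (⌊1 / r⌋₊ : ℝ) ≤ 1 / r := Nat.floor_le (by positivity)
    have h2 : (1 : ℝ) ≤ 1 / r := one_le_one_div hr0 hr1
    linarith [show 2 / r = 1 / r + 1 / r by ring]
  calc ((⌊1 / r⌋₊ : ℝ) + 1) * (2 * r) ^ d ≤ 2 / r * (2 * r) ^ d := by gcongr
    _ = 2 ^ (d + 1) * r ^ (d - 1) := by
        obtain ⟨k, rfl⟩ := Nat.exists_eq_add_of_lt hd
        field_simp
        simp only [Nat.add_sub_cancel, zero_add]
        ring

lemma pow_div_le_mul_one_add_rpow_neg {R t : ℝ} (hR : 0 ≤ R) (ht : 1 ≤ t) (m : ℕ) :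
    (R / t) ^ m ≤ (2 * R) ^ m * (1 + t) ^ (-(m : ℝ)) := by
  have ht0 : 0 < t := by linarith
  have hR_div : R / t ≤ 2 * R / (1 + t) := by
    rw [div_le_div_iff₀ ht0 (by linarith)]
    nlinarith
  calc (R / t) ^ m ≤ (2 * R / (1 + t)) ^ m := by gcongr
    _ = (2 * R) ^ m * (1 + t) ^ (-(m : ℝ)) := by
        rw [div_pow, Real.rpow_neg (by linarith), Real.rpow_natCast, div_eq_mul_inv]

namespace MeasureTheory.Measure

variable {E : Type*} [NormedAddCommGroup E] [NormedSpace ℝ E] [FiniteDimensional ℝ E]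
  [MeasurableSpace E] [BorelSpace E] (μ : Measure E) [μ.IsAddHaarMeasure]

lemma toSphere_real_le_of_forall_dist_le (hd : 0 < finrank ℝ E) {p : E} (hp : ‖p‖ ≤ 1)
    {r : ℝ} (hr0 : 0 < r) (hr1 : r ≤ 1) {A : Set (sphere (0 : E) 1)} (hA : MeasurableSet A)
    (hAr : ∀ θ ∈ A, dist (θ : E) p ≤ r) :
    μ.toSphere.real A ≤
      finrank ℝ E * 2 ^ (finrank ℝ E + 1) * μ.real (ball 0 1) * r ^ (finrank ℝ E - 1) := by
  set d := finrank ℝ E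
  set N := ⌊1 / r⌋₊
  have hcover := Ioo_smul_subset_biUnion_closedBall hp hr0
    (s := ((↑) '' A : Set E)) (by rintro _ ⟨θ, hθ, rfl⟩; exact mem_closedBall.2 (hAr θ hθ))
  have hfin : μ (⋃ i ∈ Finset.range (N + 1), closedBall (((i : ℝ) * r) • p) (2 * r)) ≠ ⊤ :=
    ((Finset.range _).isCompact_biUnion fun _ _ ↦ isCompact_closedBall _ _).measure_ne_top
  calc μ.toSphere.real A = d * μ.real (Set.Ioo (0 : ℝ) 1 • ((↑) '' A)) := by
        simp [measureReal_def, μ.toSphere_apply' hA, d]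
    _ ≤ d * ∑ i ∈ Finset.range (N + 1), μ.real (closedBall (((i : ℝ) * r) • p) (2 * r)) := by
        gcongr
        exact (measureReal_mono hcover hfin).trans (measureReal_biUnion_finset_le _ _)
    _ = d * ((N + 1) * (2 * r) ^ d) * μ.real (ball 0 1) := by
        simp only [μ.addHaar_real_closedBall _ (by positivity : (0 : ℝ) ≤ 2 * r),
          Finset.sum_const, Finset.card_range, nsmul_eq_mul]
        push_cast
        ring
    _ ≤ d * (2 ^ (d + 1) * r ^ (d - 1)) * μ.real (ball 0 1) := by
        gcongr d * ?_ * _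
        exact natFloor_one_div_add_one_mul_pow_le hr0 hr1 hd
    _ = d * 2 ^ (d + 1) * μ.real (ball 0 1) * r ^ (d - 1) := by ring

lemma exists_toSphere_real_le_mul_pow (hd : 0 < finrank ℝ E) :
    ∃ K ≥ 0, ∀ p : E, ‖p‖ ≤ 1 → ∀ r > 0, ∀ A : Set (sphere (0 : E) 1), MeasurableSet A →
      (∀ θ ∈ A, dist (θ : E) p ≤ r) → μ.toSphere.real A ≤ K * r ^ (finrank ℝ E - 1) := by
  set K := max (finrank ℝ E * 2 ^ (finrank ℝ E + 1) * μ.real (ball 0 1)) (μ.toSphere.real .univ)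
  refine ⟨K, le_max_of_le_right measureReal_nonneg, fun p hp r hr A hA hAr ↦ ?_⟩
  rcases le_or_gt r 1 with hr1 | hr1
  · exact (μ.toSphere_real_le_of_forall_dist_le hd hp hr hr1 hA hAr).trans
      (by gcongr; exact le_max_left _ _)
  · calc μ.toSphere.real A ≤ μ.toSphere.real .univ := measureReal_mono (Set.subset_univ A)
      _ ≤ K * 1 := by rw [mul_one]; exact le_max_right _ _
      _ ≤ K * r ^ (finrank ℝ E - 1) := by gcongr; exact one_le_pow₀ hr1.le

/-- Any two points of the set have distance at most `2R/t`. -/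
lemma exists_toSphere_real_setOf_norm_add_smul_le (hd : 0 < finrank ℝ E) :
    ∃ K ≥ 0, ∀ (x : E) (t R : ℝ), 0 < t → 0 < R →
      μ.toSphere.real {θ : sphere (0 : E) 1 | ‖x + t • (θ : E)‖ ≤ R} ≤
        K * (R / t) ^ (finrank ℝ E - 1) := by
  obtain ⟨K, hK0, hK⟩ := μ.exists_toSphere_real_le_mul_pow hd
  refine ⟨K * 2 ^ (finrank ℝ E - 1), by positivity, fun x t R ht hR ↦ ?_⟩
  set A := {θ : sphere (0 : E) 1 | ‖x + t • (θ : E)‖ ≤ R}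
  rcases A.eq_empty_or_nonempty with hA | ⟨θ₀, hθ₀⟩
  · rw [hA, measureReal_empty]
    positivity
  have hA : MeasurableSet A := (isClosed_le (by fun_prop) continuous_const).measurableSet
  have hAr : ∀ θ ∈ A, dist (θ : E) θ₀ ≤ 2 * R / t := by
    intro θ hθ
    rw [le_div_iff₀ ht, mul_comm, ← Real.norm_of_nonneg ht.le, ← dist_smul₀,
      ← dist_add_left x]
    exact (dist_le_norm_add_norm _ _).trans (by linarith [show _ ≤ R from hθ, show _ ≤ R from hθ₀])
  calc μ.toSphere.real A ≤ K * (2 * R / t) ^ (finrank ℝ E - 1) :=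
        hK θ₀ (norm_eq_of_mem_sphere θ₀).le _ (by positivity) A hA hAr
    _ = K * 2 ^ (finrank ℝ E - 1) * (R / t) ^ (finrank ℝ E - 1) := by
        rw [mul_div_assoc, mul_pow, mul_assoc]

lemma exists_abs_integral_toSphere_le (hd : 0 < finrank ℝ E) :
    ∃ K ≥ 0, ∀ (g : E → ℝ) (M R : ℝ), (∀ y, |g y| ≤ M) → 0 < R → (∀ y, g y ≠ 0 → ‖y‖ ≤ R) →
      ∀ (x : E) (t : ℝ), 0 < t →
        |∫ θ, g (x + t • (θ : E)) ∂μ.toSphere| ≤ M * K * (R / t) ^ (finrank ℝ E - 1) := by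
  obtain ⟨K, hK0, hK⟩ := μ.exists_toSphere_real_setOf_norm_add_smul_le hd
  refine ⟨K, hK0, fun g M R hM hR hg x t ht ↦ ?_⟩
  set A := {θ : sphere (0 : E) 1 | ‖x + t • (θ : E)‖ ≤ R}
  have hM0 : 0 ≤ M := (abs_nonneg _).trans (hM 0)
  have hgA : ∫ θ in A, g (x + t • (θ : E)) ∂μ.toSphere = ∫ θ, g (x + t • (θ : E)) ∂μ.toSphere :=
    setIntegral_eq_integral_of_forall_compl_eq_zero fun θ hθ ↦ by_contra fun h ↦ hθ (hg _ h)
  calc |∫ θ, g (x + t • (θ : E)) ∂μ.toSphere|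
      ≤ M * μ.toSphere.real A := by
        rw [← hgA, ← Real.norm_eq_abs]
        exact norm_setIntegral_le_of_norm_le_const (measure_lt_top _ _) fun θ _ ↦ hM _
    _ ≤ M * (K * (R / t) ^ (finrank ℝ E - 1)) := by gcongr; exact hK x t R ht hR
    _ = M * K * (R / t) ^ (finrank ℝ E - 1) := by ring

end MeasureTheory.Measure

/-- If `h : ℝⁿ → ℝ` is continuous with support in the ball `|x| ≤ R`, then there is a
constant `C` with `|(Mh)(x,t)| ≤ C (1+t)^{-(n-1)}` for all `x` and all `t ≥ 1`. -/
theorem stmt_6 (n : ℕ) (hn : 1 < n) (R : ℝ) (h : EuclideanSpace ℝ (Fin n) → ℝ)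
    (hc : Continuous h)
    (hsupp : ∀ x : EuclideanSpace ℝ (Fin n), h x ≠ 0 → ‖x‖ ≤ R) :
    ∃ C : ℝ, ∀ (x : EuclideanSpace ℝ (Fin n)) (t : ℝ), 1 ≤ t →
      |sphericalMean n h x t| ≤ C * (1 + t) ^ (-((n : ℝ) - 1)) := by
  obtain ⟨M, hM⟩ : ∃ M, ∀ y, ‖h y‖ ≤ M :=
    hc.bounded_above_of_compact_support <| .intro (isCompact_closedBall 0 R) fun y hy ↦
      by_contra fun h0 ↦ hy (mem_closedBall_zero_iff.2 (hsupp y h0))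
  obtain ⟨K, hK0, hK⟩ := volume.exists_abs_integral_toSphere_le
    (E := EuclideanSpace ℝ (Fin n)) (by simp; omega)
  set R' := max R 1
  have hsupp' : ∀ y, h y ≠ 0 → ‖y‖ ≤ R' := fun y hy ↦ (hsupp y hy).trans (le_max_left _ _)
  set c := (2 * Real.pi ^ ((n : ℝ) / 2) / Real.Gamma ((n : ℝ) / 2))⁻¹
  refine ⟨|c| * (M * K * (2 * R') ^ (n - 1)), fun x t ht ↦ ?_⟩
  have hM0 : 0 ≤ M := (norm_nonneg _).trans (hM 0)
  calc |sphericalMean n h x t|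
      ≤ |c| * (M * K * (R' / t) ^ (n - 1)) := by
        rw [sphericalMean, abs_mul]
        gcongr
        simpa using hK h M R' hM (by positivity) hsupp' x t (by linarith)
    _ ≤ |c| * (M * K * ((2 * R') ^ (n - 1) * (1 + t) ^ (-((n - 1 : ℕ) : ℝ)))) := by
        gcongr
        exact pow_div_le_mul_one_add_rpow_neg (by positivity) ht _
    _ = |c| * (M * K * (2 * R') ^ (n - 1)) * (1 + t) ^ (-((n : ℝ) - 1)) := by
        rw [Nat.cast_sub hn.le, Nat.cast_one]
        ring
end
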